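/- Let ξ be a real quadratic irrational with ultimately periodic continued fraction ξ = [0; a₁,…,a_r, \overline{a_{r+1},…,a_{r+s}}] (the block a_{r+1},…,a_{r+s} repeated forever). Then the height of ξ satisfies H(ξ) ≤ 2 q_r q_{r+s}, where (p_n/q_n) is the convergent sequence of ξ. -/

import Mathlib

open Filter Finset Polynomial

/-- Numerators of the convergents of the continued fraction `[a 0; a 1, a 2, …]`. -/
def convP (a : ℕ → ℤ) : ℕ → ℤ
  | 0 => a 0
  | 1 => a 1 * a 0 + 1
  | (n+2) => a (n+2) * convP a (n+1) + convP a n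

/-- Denominators of the convergents of the continued fraction `[a 0; a 1, a 2, …]`. -/
def convQ (a : ℕ → ℤ) : ℕ → ℤ
  | 0 => 1
  | 1 => a 1
  | (n+2) => a (n+2) * convQ a (n+1) + convQ a n

/-- `ξ` is the value of the continued fraction with partial quotients `a`,
i.e. the limit of its convergents. -/
def IsCFValue (a : ℕ → ℤ) (ξ : ℝ) : Prop :=
  Filter.Tendsto (fun n => (convP a n : ℝ) / (convQ a n : ℝ)) Filter.atTop (nhds ξ)

/-- Naive height of an integer polynomial: max of the absolute values of its coefficients. -/
def polyHeight (P : Polynomial ℤ) : ℕ := P.support.sup fun i => (P.coeff i).natAbs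

/-- Naive height of a real algebraic number: the height of its minimal polynomial over `ℤ`
(an irreducible integer polynomial vanishing at `α`). -/
noncomputable def algHeight (α : ℝ) : ℕ :=
  sInf {h | ∃ P : Polynomial ℤ, Irreducible P ∧ Polynomial.aeval α P = 0 ∧ polyHeight P = h}

/-- `α` is algebraic of degree exactly `n` over `ℚ`. -/
def IsAlgDeg (α : ℝ) (n : ℕ) : Prop :=
  ∃ P : Polynomial ℤ, Irreducible P ∧ P.natDegree = n ∧ Polynomial.aeval α P = 0

/-!
Let `M n = !![p n, p (n - 1); q n, q (n - 1)]`. Periodicity gives `M (n + s) = T * M n` for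
`n ≥ r`, where `T = M (r + s) * (M r)⁻¹` has integer entries because `det (M r) = ±1`. Letting
`n → ∞` in `p (n + s) / q (n + s) = T • (p n / q n)` shows that `ξ` is a fixed point of the Möbius
map of `T`, i.e. a root of `T₁₀ X² + (T₁₁ - T₀₀) X - T₀₁`. This quadratic is nonzero: otherwise
`T = c • 1`, determinants force `c = ±1`, and `M (r + s) = ± M r` contradicts the growth of
`q n + q (n - 1)`. By Gauss's lemma the minimal polynomial of `ξ` divides it, so `H(ξ)` is at most
its height, and since the entries of `M r` and `M (r + s)` lie in `[0, q r]` and `[0, q (r + s)]`,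
its coefficients are at most `2 q_r q_{r+s}` in absolute value.
-/

open Matrix

/-- `prevConvP a n = p_{n-1}` and `prevConvQ a n = q_{n-1}`, with `p_{-1} = 1`, `q_{-1} = 0`. -/
def prevConvP (a : ℕ → ℤ) : ℕ → ℤ
  | 0 => 1
  | n + 1 => convP a n

def prevConvQ (a : ℕ → ℤ) : ℕ → ℤ
  | 0 => 0
  | n + 1 => convQ a n

def convMat (a : ℕ → ℤ) (n : ℕ) : Matrix (Fin 2) (Fin 2) ℤ :=
  !![convP a n, prevConvP a n; convQ a n, prevConvQ a n]

section Convergents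

variable (a : ℕ → ℤ)

theorem convP_succ (n : ℕ) : convP a (n + 1) = a (n + 1) * convP a n + prevConvP a n := by
  cases n <;> simp [convP, prevConvP]

theorem convQ_succ (n : ℕ) : convQ a (n + 1) = a (n + 1) * convQ a n + prevConvQ a n := by
  cases n <;> simp [convQ, prevConvQ]

theorem convMat_succ (n : ℕ) : convMat a (n + 1) = convMat a n * !![a (n + 1), 1; 1, 0] := by
  ext i j
  fin_cases i <;> fin_cases j <;>
    simp [convMat, convP_succ, convQ_succ, prevConvP, prevConvQ, mul_comm]

theorem det_convMat (n : ℕ) : (convMat a n).det = (-1) ^ (n + 1) := by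
  induction n with
  | zero => simp [convMat, det_fin_two_of, convP, convQ, prevConvP, prevConvQ]
  | succ n ih => rw [convMat_succ, det_mul, ih, det_fin_two_of]; ring

theorem mul_convMat_of_periodic {r s : ℕ} (hper : ∀ n, r + 1 ≤ n → a (n + s) = a n)
    {T : Matrix (Fin 2) (Fin 2) ℤ} (hT : T * convMat a r = convMat a (r + s)) {n : ℕ}
    (hn : r ≤ n) : T * convMat a n = convMat a (n + s) := by
  induction n, hn using Nat.le_induction with
  | base => exact hT
  | succ n hn ih =>
    rw [convMat_succ, ← mul_assoc, ih, show n + 1 + s = n + s + 1 by omega, convMat_succ,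
      show n + s + 1 = n + 1 + s by omega, hper (n + 1) (by omega)]

variable {a} (ha : ∀ n, 1 ≤ n → 1 ≤ a n)
include ha

theorem convQ_pos_and_prevConvQ_nonneg : ∀ n, 0 < convQ a n ∧ 0 ≤ prevConvQ a n
  | 0 => by simp [convQ, prevConvQ]
  | n + 1 => by
    obtain ⟨hq, hq'⟩ := convQ_pos_and_prevConvQ_nonneg n
    rw [convQ_succ]
    exact ⟨by nlinarith [ha (n + 1) (by omega)], hq.le⟩

theorem prevConvQ_le_convQ : ∀ n, prevConvQ a n ≤ convQ a n
  | 0 => by simp [convQ, prevConvQ]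
  | n + 1 => by
    obtain ⟨hq, hq'⟩ := convQ_pos_and_prevConvQ_nonneg ha n
    rw [convQ_succ]
    show convQ a n ≤ _
    nlinarith [ha (n + 1) (by omega)]

theorem convQ_add_prevConvQ_strictMono : StrictMono fun n ↦ convQ a n + prevConvQ a n := by
  refine strictMono_nat_of_lt_succ fun n ↦ ?_
  obtain ⟨hq, hq'⟩ := convQ_pos_and_prevConvQ_nonneg ha n
  rw [convQ_succ]
  show _ < _ + convQ a n
  nlinarith [ha (n + 1) (by omega)]

theorem convP_mem_Icc (ha0 : a 0 = 0) : ∀ n, convP a n ∈ Set.Icc 0 (convQ a n)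
  | 0 => by simp [convP, convQ, ha0]
  | 1 => by simpa [convP, convQ, ha0] using ha 1 le_rfl
  | n + 2 => by
    obtain ⟨hp₀, hp₀q⟩ := convP_mem_Icc ha0 n
    obtain ⟨hp₁, hp₁q⟩ := convP_mem_Icc ha0 (n + 1)
    have han := ha (n + 2) (by omega)
    simp only [convP, convQ, Set.mem_Icc]
    constructor <;> nlinarith

theorem convMat_mem_Icc (ha0 : a 0 = 0) (n : ℕ) (i j : Fin 2) :
    convMat a n i j ∈ Set.Icc 0 (convQ a n) := by
  obtain ⟨hq, hq'⟩ := convQ_pos_and_prevConvQ_nonneg ha n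
  fin_cases i <;> fin_cases j
  · exact convP_mem_Icc ha ha0 n
  · cases n with
    | zero => simp [convMat, prevConvP, convQ]
    | succ n =>
      obtain ⟨hp, hpq⟩ := convP_mem_Icc ha ha0 n
      exact ⟨hp, hpq.trans (prevConvQ_le_convQ ha (n + 1))⟩
  · exact ⟨hq.le, le_rfl⟩
  · exact ⟨hq', prevConvQ_le_convQ ha n⟩

theorem smul_convMat_ne_convMat_add (r : ℕ) {s : ℕ} (hs : 1 ≤ s) (c : ℤ) :
    c • convMat a r ≠ convMat a (r + s) := by
  intro h
  have hdet := congrArg det h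
  rw [det_smul, det_convMat, det_convMat, Fintype.card_fin] at hdet
  have hc : c ≤ 1 := by
    rcases neg_one_pow_eq_or ℤ (r + 1) with h₁ | h₁ <;>
      rcases neg_one_pow_eq_or ℤ (r + s + 1) with h₂ | h₂ <;>
      rw [h₁, h₂] at hdet <;> nlinarith
  have hq : c * convQ a r = convQ a (r + s) := by simpa [convMat] using congrFun (congrFun h 1) 0
  have hq' : c * prevConvQ a r = prevConvQ a (r + s) := by
    simpa [convMat] using congrFun (congrFun h 1) 1
  have hlt := convQ_add_prevConvQ_strictMono ha (show r < r + s by omega)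
  obtain ⟨hpos, hnonneg⟩ := convQ_pos_and_prevConvQ_nonneg ha r
  simp only at hlt
  nlinarith

end Convergents

section PeriodMatrix

variable (a : ℕ → ℤ) (r s : ℕ)

/-- `convMat a (r + s) * (convMat a r)⁻¹`, written with the adjugate since
`det (convMat a r) = ±1`. -/
def periodMat : Matrix (Fin 2) (Fin 2) ℤ :=
  (convMat a r).det • (convMat a (r + s) * adjugate (convMat a r))

theorem periodMat_mul_convMat : periodMat a r s * convMat a r = convMat a (r + s) := by
  rw [periodMat, smul_mul_assoc, mul_assoc, adjugate_mul, mul_smul_comm, mul_one, smul_smul,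
    det_convMat, ← mul_pow, neg_one_mul, neg_neg, one_pow, one_smul]

end PeriodMatrix

section MobiusFixedPoly

/-- The fixed points of `x ↦ (T₀₀ x + T₀₁) / (T₁₀ x + T₁₁)` are the roots of this polynomial. -/
noncomputable def mobiusFixedPoly (T : Matrix (Fin 2) (Fin 2) ℤ) : ℤ[X] :=
  C (T 1 0) * X ^ 2 + C (T 1 1 - T 0 0) * X - C (T 0 1)

variable (T : Matrix (Fin 2) (Fin 2) ℤ)

theorem natDegree_mobiusFixedPoly_le : (mobiusFixedPoly T).natDegree ≤ 2 := by
  unfold mobiusFixedPoly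
  compute_degree

theorem coeff_zero_mobiusFixedPoly : (mobiusFixedPoly T).coeff 0 = -T 0 1 := by
  simp only [mobiusFixedPoly, coeff_add, coeff_sub, coeff_C_mul, coeff_X_pow, coeff_X, coeff_C]
  norm_num

theorem coeff_one_mobiusFixedPoly : (mobiusFixedPoly T).coeff 1 = T 1 1 - T 0 0 := by
  simp only [mobiusFixedPoly, coeff_add, coeff_sub, coeff_C_mul, coeff_X_pow, coeff_X, coeff_C]
  norm_num

theorem coeff_two_mobiusFixedPoly : (mobiusFixedPoly T).coeff 2 = T 1 0 := by
  simp only [mobiusFixedPoly, coeff_add, coeff_sub, coeff_C_mul, coeff_X_pow, coeff_X, coeff_C]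
  norm_num

theorem eq_smul_one_of_mobiusFixedPoly_eq_zero (h : mobiusFixedPoly T = 0) : T = T 0 0 • 1 := by
  have h₀ := coeff_zero_mobiusFixedPoly T
  have h₁ := coeff_one_mobiusFixedPoly T
  have h₂ := coeff_two_mobiusFixedPoly T
  simp only [h, coeff_zero] at h₀ h₁ h₂
  ext i j
  fin_cases i <;> fin_cases j <;> simp <;> omega

theorem aeval_mobiusFixedPoly (ξ : ℝ) : aeval ξ (mobiusFixedPoly T) =
    ξ * (T 1 0 * ξ + T 1 1) - (T 0 0 * ξ + T 0 1) := by
  simp [mobiusFixedPoly]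
  ring

theorem aeval_mobiusFixedPoly_eq_zero_of_tendsto {M : ℕ → Matrix (Fin 2) (Fin 2) ℤ} {ξ : ℝ} {s : ℕ} (hM : ∀ᶠ n in atTop, M n 1 0 ≠ 0)
    (hξ : Tendsto (fun n ↦ (M n 0 0 : ℝ) / M n 1 0) atTop (nhds ξ))
    (hT : ∀ᶠ n in atTop, T * M n = M (n + s)) : aeval ξ (mobiusFixedPoly T) = 0 := by
  set x := fun n ↦ (M n 0 0 : ℝ) / M n 1 0
  have hlim : Tendsto (fun n ↦ x (n + s) * (T 1 0 * x n + T 1 1) - (T 0 0 * x n + T 0 1)) atTop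
      (nhds (aeval ξ (mobiusFixedPoly T))) := by
    rw [aeval_mobiusFixedPoly]
    exact ((hξ.comp (tendsto_add_atTop_nat s)).mul ((hξ.const_mul _).add_const _)).sub
      ((hξ.const_mul _).add_const _)
  refine tendsto_nhds_unique hlim (tendsto_const_nhds.congr' ?_)
  filter_upwards [hM, (tendsto_add_atTop_nat s).eventually hM, hT] with n hn hns hTn
  have hp : M (n + s) 0 0 = T 0 0 * M n 0 0 + T 0 1 * M n 1 0 := by
    simp [← hTn, Matrix.mul_apply, Fin.sum_univ_two]
  have hq : M (n + s) 1 0 = T 1 0 * M n 0 0 + T 1 1 * M n 1 0 := by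
    simp [← hTn, Matrix.mul_apply, Fin.sum_univ_two]
  have hn' : (M n 1 0 : ℝ) ≠ 0 := by exact_mod_cast hn
  have hns' : (M (n + s) 1 0 : ℝ) ≠ 0 := by exact_mod_cast hns
  simp only [x]
  field_simp
  push_cast [hp, hq]
  ring

theorem polyHeight_mobiusFixedPoly_le {N : ℤ} (h₀ : |T 0 1| ≤ N) (h₁ : |T 1 1 - T 0 0| ≤ N)
    (h₂ : |T 1 0| ≤ N) : (polyHeight (mobiusFixedPoly T) : ℤ) ≤ N := by
  lift N to ℕ using (abs_nonneg _).trans h₀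
  rw [Int.abs_eq_natAbs] at h₀ h₁ h₂
  refine Nat.cast_le.mpr (Finset.sup_le fun i hi ↦ ?_)
  have hi2 : i ≤ 2 := (le_natDegree_of_mem_supp i hi).trans (natDegree_mobiusFixedPoly_le T)
  interval_cases i
  · rw [coeff_zero_mobiusFixedPoly, Int.natAbs_neg]; omega
  · rw [coeff_one_mobiusFixedPoly]; omega
  · rw [coeff_two_mobiusFixedPoly]; omega

end MobiusFixedPoly

theorem Irreducible.dvd_of_aeval_eq_zero {K : Type*} [Field K] [CharZero K] {P Q : ℤ[X]}
    (hP : Irreducible P) (hdeg : P.natDegree ≠ 0) {x : K} (hPx : aeval x P = 0)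
    (hQx : aeval x Q = 0) : P ∣ Q := by
  have hprim := hP.isPrimitive hdeg
  have hirr := (hprim.irreducible_iff_irreducible_map_fraction_map (K := ℚ)).mp hP
  refine hprim.dvd_of_fraction_map_dvd_fraction_map (K := ℚ) ?_
  exact (hirr.dvd_iff_aeval_eq_zero (b := x) (by rwa [aeval_map_algebraMap])).mp
    (by rwa [aeval_map_algebraMap])

theorem algHeight_le_polyHeight {P : ℤ[X]} (hP : Irreducible P) {α : ℝ} (hα : aeval α P = 0) :
    algHeight α ≤ polyHeight P :=
  Nat.sInf_le ⟨P, hP, hα, rfl⟩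

theorem polyHeight_le_of_dvd {P Q : ℤ[X]} (hQ : Q ≠ 0) (hPQ : P ∣ Q)
    (hdeg : Q.natDegree ≤ P.natDegree) : polyHeight P ≤ polyHeight Q := by
  obtain ⟨g, rfl⟩ := hPQ
  have hP : P ≠ 0 := left_ne_zero_of_mul hQ
  have hg : g ≠ 0 := right_ne_zero_of_mul hQ
  have hg0 : g.natDegree = 0 := by rw [natDegree_mul hP hg] at hdeg; omega
  obtain ⟨k, rfl⟩ := natDegree_eq_zero.mp hg0
  have hk : k ≠ 0 := by rintro rfl; simp at hg
  refine Finset.sup_le fun i hi ↦ ?_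
  have hi' : (P * C k).coeff i ≠ 0 := by
    rw [coeff_mul_C]; exact mul_ne_zero (mem_support_iff.mp hi) hk
  calc (P.coeff i).natAbs ≤ ((P * C k).coeff i).natAbs := by
        rw [coeff_mul_C, Int.natAbs_mul]; exact Nat.le_mul_of_pos_right _ (Int.natAbs_pos.mpr hk)
    _ ≤ polyHeight (P * C k) :=
        Finset.le_sup (f := fun j ↦ ((P * C k).coeff j).natAbs) (mem_support_iff.mpr hi')

theorem polyHeight_mobiusFixedPoly_smul_mul_adjugate_le {M N : Matrix (Fin 2) (Fin 2) ℤ}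
    {m n ε : ℤ} (hM : ∀ i j, M i j ∈ Set.Icc 0 m) (hN : ∀ i j, N i j ∈ Set.Icc 0 n)
    (hε : |ε| = 1) : (polyHeight (mobiusFixedPoly (ε • (N * adjugate M))) : ℤ) ≤ 2 * m * n := by
  have hprod (i j k l : Fin 2) : 0 ≤ N i j * M k l ∧ N i j * M k l ≤ n * m :=
    ⟨mul_nonneg (hN i j).1 (hM k l).1,
      mul_le_mul (hN i j).2 (hM k l).2 (hM k l).1 ((hN i j).1.trans (hN i j).2)⟩
  have hsmul (x : ℤ) : |ε * x| = |x| := by rw [abs_mul, hε, one_mul]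
  apply polyHeight_mobiusFixedPoly_le <;>
    simp only [Matrix.smul_apply, smul_eq_mul, ← mul_sub, hsmul, mul_apply, Fin.sum_univ_two,
      adjugate_fin_two, of_apply, cons_val_zero, cons_val_one, cons_val_fin_one, mul_neg] <;>
    rw [abs_le] <;> constructor
  all_goals
    linarith [hprod 0 0 0 1, hprod 0 1 0 0, hprod 1 0 1 1, hprod 1 1 1 0, hprod 1 0 0 1,
      hprod 1 1 0 0, hprod 0 0 1 1, hprod 0 1 1 0]

/-- If `ξ` is a real quadratic irrational with ultimately periodic continued fraction
`ξ = [0; a 1, …, a r, overline{a (r+1), …, a (r+s)}]`, then `H(ξ) ≤ 2 * q_r * q_{r+s}`. -/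
theorem height_of_periodic_cf (a : ℕ → ℤ) (ha0 : a 0 = 0) (ha : ∀ n, 1 ≤ n → 1 ≤ a n)
    (r s : ℕ) (hs : 1 ≤ s) (hper : ∀ n, r + 1 ≤ n → a (n + s) = a n)
    (ξ : ℝ) (hξ : IsCFValue a ξ) (hquad : IsAlgDeg ξ 2) :
    (algHeight ξ : ℝ) ≤ 2 * (convQ a r : ℝ) * (convQ a (r + s) : ℝ) := by
  obtain ⟨P, hPirr, hPdeg, hPξ⟩ := hquad
  set T := periodMat a r s
  have hT (n : ℕ) (hn : r ≤ n) : T * convMat a n = convMat a (n + s) :=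
    mul_convMat_of_periodic a hper (periodMat_mul_convMat a r s) hn
  have hroot : aeval ξ (mobiusFixedPoly T) = 0 :=
    aeval_mobiusFixedPoly_eq_zero_of_tendsto T
      (Eventually.of_forall fun n ↦ (convQ_pos_and_prevConvQ_nonneg ha n).1.ne') (by
        simpa [convMat, IsCFValue] using hξ)
      (eventually_atTop.mpr ⟨r, hT⟩)
  have hne : mobiusFixedPoly T ≠ 0 := fun h ↦ smul_convMat_ne_convMat_add ha r hs (T 0 0) <| by
    rw [← hT r le_rfl, ← smul_one_mul, ← eq_smul_one_of_mobiusFixedPoly_eq_zero T h]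
  have hdvd : P ∣ mobiusFixedPoly T := hPirr.dvd_of_aeval_eq_zero (by omega) hPξ hroot
  have hbound : (polyHeight (mobiusFixedPoly T) : ℤ) ≤ 2 * convQ a r * convQ a (r + s) :=
    polyHeight_mobiusFixedPoly_smul_mul_adjugate_le (convMat_mem_Icc ha ha0 r)
      (convMat_mem_Icc ha ha0 (r + s)) (by rw [det_convMat, abs_pow, abs_neg, abs_one, one_pow])
  calc (algHeight ξ : ℝ) ≤ polyHeight P := mod_cast algHeight_le_polyHeight hPirr hPξ
    _ ≤ polyHeight (mobiusFixedPoly T) := by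
      exact_mod_cast polyHeight_le_of_dvd hne hdvd (hPdeg ▸ natDegree_mobiusFixedPoly_le T)
    _ ≤ 2 * (convQ a r : ℝ) * (convQ a (r + s) : ℝ) := by exact_mod_cast hbound
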